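/- arXiv:1110.2444 — 3 statements merged into one kernel-verified Lean document; each statement's English description precedes it below -/
import Mathlib

section
/- Let H_1 and H_2 be disjoint finite simple graphs with vertices v_1 ∈ V(H_1) and v_2 ∈ V(H_2), and let G be the graph obtained from the disjoint union of H_1 and H_2 by adding one new vertex u adjacent to both v_1 and v_2. Then for all λ > 2: φ_G(λ) = (x_2 − x_1)·(q_{(H_1,v_1)}(λ)·q_{(H_2,v_2)}(λ) − p_{(H_1,v_1)}(λ)·p_{(H_2,v_2)}(λ)). -/
open Finset
open scoped Classical

/-- Adjacency matrix of a simple graph over `ℝ`. -/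
noncomputable def adjM {V : Type*} [Fintype V] (G : SimpleGraph V) : Matrix V V ℝ :=
  fun a b => if G.Adj a b then 1 else 0

/-- Spectral radius: the largest eigenvalue of the adjacency matrix. -/
noncomputable def specRad {V : Type*} [Fintype V] (G : SimpleGraph V) : ℝ :=
  sSup {t : ℝ | ∃ f : V → ℝ, f ≠ 0 ∧ (adjM G).mulVec f = t • f}

/-- Characteristic polynomial of the adjacency matrix, as a function `φ_G(λ) = det(λI − A)`. -/
noncomputable def phi {V : Type*} [Fintype V] [DecidableEq V] (G : SimpleGraph V) (l : ℝ) : ℝ :=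
  (l • (1 : Matrix V V ℝ) - adjM G).det

/-- `G` is connected with diameter exactly `D`. -/
def hasDiam {V : Type*} (G : SimpleGraph V) (D : ℕ) : Prop :=
  G.Connected ∧ (∀ u v : V, G.dist u v ≤ D) ∧ ∃ u v : V, G.dist u v = D

/-- `G` is a minimizer graph among connected graphs on `n` vertices with diameter `D`. -/
def IsMinimizer (n D : ℕ) (G : SimpleGraph (Fin n)) : Prop :=
  hasDiam G D ∧ ∀ H : SimpleGraph (Fin n), hasDiam H D → specRad G ≤ specRad H

noncomputable def x1 (l : ℝ) : ℝ := (l - Real.sqrt (l ^ 2 - 4)) / 2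
noncomputable def x2 (l : ℝ) : ℝ := (l + Real.sqrt (l ^ 2 - 4)) / 2
noncomputable def d1f (l : ℝ) : ℝ := l - x1 l ^ 3
noncomputable def d2f (l : ℝ) : ℝ := x2 l ^ 3 - l

/-- Deletion of a vertex from a graph. -/
def delVert {V : Type*} (G : SimpleGraph V) (v : V) : SimpleGraph {u : V // u ≠ v} :=
  SimpleGraph.comap Subtype.val G

noncomputable def pfun {V : Type*} [Fintype V] [DecidableEq V] (G : SimpleGraph V) (v : V)
    (l : ℝ) : ℝ :=
  (phi (delVert G v) l - x1 l * phi G l) / (x2 l - x1 l)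

noncomputable def qfun {V : Type*} [Fintype V] [DecidableEq V] (G : SimpleGraph V) (v : V)
    (l : ℝ) : ℝ :=
  (x2 l * phi G l - phi (delVert G v) l) / (x2 l - x1 l)

/-- The graph obtained from disjoint graphs `H1`, `H2` by adding one new vertex `u`
adjacent to `v1 ∈ H1` and to `v2 ∈ H2`. -/
def joinOne {V1 V2 : Type*} (H1 : SimpleGraph V1) (v1 : V1) (H2 : SimpleGraph V2) (v2 : V2) :
    SimpleGraph (V1 ⊕ V2 ⊕ Unit) :=
  SimpleGraph.fromRel (fun a b =>
    match a, b with
    | Sum.inl a, Sum.inl b => H1.Adj a b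
    | Sum.inr (Sum.inl a), Sum.inr (Sum.inl b) => H2.Adj a b
    | Sum.inl a, Sum.inr (Sum.inr _) => a = v1
    | Sum.inr (Sum.inl a), Sum.inr (Sum.inr _) => a = v2
    | _, _ => False)

/-- det of a matrix on `α ⊕ Unit` whose last row is the unit vector. -/
lemma det_of_unit_row {α : Type*} [Fintype α] [DecidableEq α]
    (A : Matrix (α ⊕ Unit) (α ⊕ Unit) ℝ)
    (h : ∀ j, A (Sum.inr ()) (Sum.inl j) = 0) (h2 : A (Sum.inr ()) (Sum.inr ()) = 1) :
    A.det = (A.submatrix Sum.inl Sum.inl).det := by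
  have hA : A = Matrix.fromBlocks (A.submatrix Sum.inl Sum.inl)
      (A.submatrix Sum.inl Sum.inr) 0 1 := by
    ext i j
    rcases i with i | i <;> rcases j with j | j <;>
      simp [Matrix.fromBlocks, Matrix.one_apply, h, h2]
  conv_lhs => rw [hA]
  rw [Matrix.det_fromBlocks_zero₂₁]
  simp

/-- det of a matrix on `α ⊕ Unit` whose last column is the unit vector. -/
lemma det_of_unit_col {α : Type*} [Fintype α] [DecidableEq α]
    (A : Matrix (α ⊕ Unit) (α ⊕ Unit) ℝ)
    (h : ∀ i, A (Sum.inl i) (Sum.inr ()) = 0) (h2 : A (Sum.inr ()) (Sum.inr ()) = 1) :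
    A.det = (A.submatrix Sum.inl Sum.inl).det := by
  have hA : A = Matrix.fromBlocks (A.submatrix Sum.inl Sum.inl)
      0 (A.submatrix Sum.inr Sum.inl) 1 := by
    ext i j
    rcases i with i | i <;> rcases j with j | j <;>
      simp [Matrix.fromBlocks, Matrix.one_apply, h, h2]
  conv_lhs => rw [hA]
  rw [Matrix.det_fromBlocks_zero₁₂]
  simp

/-- Bordered determinant: if the last row of `A` is the unit vector at `inl w`,
then `det A` is minus the det of the main block with column `w` replaced by
the last column. -/
lemma det_border {β : Type*} [Fintype β] [DecidableEq β]
    (A : Matrix (β ⊕ Unit) (β ⊕ Unit) ℝ) (w : β)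
    (hrow : A (Sum.inr ()) = Pi.single (Sum.inl w) 1) :
    A.det = - ((A.submatrix Sum.inl Sum.inl).updateCol w
      (fun i => A (Sum.inl i) (Sum.inr ()))).det := by
  set σ : Equiv.Perm (β ⊕ Unit) := Equiv.swap (Sum.inr ()) (Sum.inl w) with hσ
  have hne : (Sum.inr () : β ⊕ Unit) ≠ Sum.inl w := by simp
  have hdetC : (A.submatrix id σ).det = Equiv.Perm.sign σ * A.det :=
    Matrix.det_permute' σ A
  have hsign : Equiv.Perm.sign σ = -1 := Equiv.Perm.sign_swap hne
  have hC : (A.submatrix id σ).det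
      = ((A.submatrix id σ).submatrix Sum.inl Sum.inl).det := by
    apply det_of_unit_row
    · intro j
      simp only [Matrix.submatrix_apply, id_eq]
      rcases eq_or_ne (Sum.inl j : β ⊕ Unit) (Sum.inl w) with h | h
      · rw [hσ]; rw [h, Equiv.swap_apply_right, hrow]
        simp
      · rw [hσ, Equiv.swap_apply_of_ne_of_ne (by simp) h, hrow]
        simp [Ne.symm (by simpa using h : j ≠ w)]
    · simp only [Matrix.submatrix_apply, id_eq]
      rw [hσ, Equiv.swap_apply_left, hrow]
      simp
  have hsub : (A.submatrix id σ).submatrix Sum.inl Sum.inl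
      = (A.submatrix Sum.inl Sum.inl).updateCol w
        (fun i => A (Sum.inl i) (Sum.inr ())) := by
    ext i j
    rcases eq_or_ne j w with h | h
    · subst h
      simp [hσ, Matrix.updateCol_self]
    · rw [Matrix.updateCol_ne h]
      simp only [Matrix.submatrix_apply, id_eq, hσ]
      rw [Equiv.swap_apply_of_ne_of_ne (by simp) (by simpa using h)]
  rw [hsub] at hC
  rw [hsign] at hdetC
  simp only [Units.val_neg, Units.val_one, Int.cast_neg, Int.cast_one, neg_mul, one_mul] at hdetC
  rw [hC] at hdetC
  linarith

def gLEquiv {V1 V2 : Type*} [DecidableEq V1] (v1 : V1) :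
    (({a : V1 // a ≠ v1} ⊕ V2) ⊕ Unit) ≃ V1 ⊕ V2 where
  toFun := Sum.elim (Sum.elim (fun a => Sum.inl a.1) Sum.inr) (fun _ => Sum.inl v1)
  invFun x := match x with
    | Sum.inl a => if h : a = v1 then Sum.inr () else Sum.inl (Sum.inl ⟨a, h⟩)
    | Sum.inr b => Sum.inl (Sum.inr b)
  left_inv := by rintro ((⟨a, ha⟩ | b) | ⟨⟩) <;> simp_all
  right_inv := by
    rintro (a | b)
    · by_cases h : a = v1 <;> simp [h]
    · simp

def gREquiv {V1 V2 : Type*} [DecidableEq V2] (v2 : V2) :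
    ((V1 ⊕ {b : V2 // b ≠ v2}) ⊕ Unit) ≃ V1 ⊕ V2 where
  toFun := Sum.elim (Sum.elim Sum.inl (fun b => Sum.inr b.1)) (fun _ => Sum.inr v2)
  invFun x := match x with
    | Sum.inl a => Sum.inl (Sum.inl a)
    | Sum.inr b => if h : b = v2 then Sum.inr () else Sum.inl (Sum.inr ⟨b, h⟩)
  left_inv := by rintro ((a | ⟨b, hb⟩) | ⟨⟩) <;> simp_all
  right_inv := by
    rintro (a | b)
    · simp
    · by_cases h : b = v2 <;> simp [h]

lemma det_bd_left {V1 V2 : Type*} [Fintype V1] [DecidableEq V1] [Fintype V2] [DecidableEq V2]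
    (B1 : Matrix V1 V1 ℝ) (B2 : Matrix V2 V2 ℝ) (v1 : V1) :
    ((Matrix.fromBlocks B1 0 0 B2).updateCol (Sum.inl v1)
      (Pi.single (Sum.inl v1) 1)).det
    = (B1.submatrix (Subtype.val : {a : V1 // a ≠ v1} → V1) Subtype.val).det * B2.det := by
  have h1 : ((Matrix.fromBlocks B1 0 0 B2).updateCol (Sum.inl v1)
        (Pi.single (Sum.inl v1) 1)).det
      = (((Matrix.fromBlocks B1 0 0 B2).updateCol (Sum.inl v1)
        (Pi.single (Sum.inl v1) 1)).submatrix (gLEquiv v1) (gLEquiv v1)).det :=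
    (Matrix.det_submatrix_equiv_self _ _).symm
  rw [h1]
  rw [det_of_unit_col]
  · have h3 : (((Matrix.fromBlocks B1 0 0 B2).updateCol (Sum.inl v1)
        (Pi.single (Sum.inl v1) 1)).submatrix (gLEquiv v1) (gLEquiv v1)).submatrix
          Sum.inl Sum.inl
      = Matrix.fromBlocks (B1.submatrix (Subtype.val : {a : V1 // a ≠ v1} → V1) Subtype.val)
        0 0 B2 := by
      ext i j
      rcases i with ⟨a, ha⟩ | b <;> rcases j with ⟨a', ha'⟩ | b' <;>
        simp_all [gLEquiv, Matrix.updateCol_apply, Pi.single_apply]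
    rw [h3, Matrix.det_fromBlocks_zero₂₁]
  · rintro (⟨a, ha⟩ | b) <;>
      simp_all [gLEquiv, Matrix.updateCol_apply, Pi.single_apply]
  · simp [gLEquiv, Matrix.updateCol_apply, Pi.single_apply]

lemma det_bd_right {V1 V2 : Type*} [Fintype V1] [DecidableEq V1] [Fintype V2] [DecidableEq V2]
    (B1 : Matrix V1 V1 ℝ) (B2 : Matrix V2 V2 ℝ) (v2 : V2) :
    ((Matrix.fromBlocks B1 0 0 B2).updateCol (Sum.inr v2)
      (Pi.single (Sum.inr v2) 1)).det
    = B1.det * (B2.submatrix (Subtype.val : {b : V2 // b ≠ v2} → V2) Subtype.val).det := by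
  have h1 : ((Matrix.fromBlocks B1 0 0 B2).updateCol (Sum.inr v2)
        (Pi.single (Sum.inr v2) 1)).det
      = (((Matrix.fromBlocks B1 0 0 B2).updateCol (Sum.inr v2)
        (Pi.single (Sum.inr v2) 1)).submatrix (gREquiv v2) (gREquiv v2)).det :=
    (Matrix.det_submatrix_equiv_self _ _).symm
  rw [h1]
  rw [det_of_unit_col]
  · have h3 : (((Matrix.fromBlocks B1 0 0 B2).updateCol (Sum.inr v2)
        (Pi.single (Sum.inr v2) 1)).submatrix (gREquiv v2) (gREquiv v2)).submatrix
          Sum.inl Sum.inl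
      = Matrix.fromBlocks B1 0 0
        (B2.submatrix (Subtype.val : {b : V2 // b ≠ v2} → V2) Subtype.val) := by
      ext i j
      rcases i with a | ⟨b, hb⟩ <;> rcases j with a' | ⟨b', hb'⟩ <;>
        simp_all [gREquiv, Matrix.updateCol_apply, Pi.single_apply]
    rw [h3, Matrix.det_fromBlocks_zero₂₁]
  · rintro (a | ⟨b, hb⟩) <;>
      simp_all [gREquiv, Matrix.updateCol_apply, Pi.single_apply]
  · simp [gREquiv, Matrix.updateCol_apply, Pi.single_apply]

lemma det_bd_cross_left {V1 V2 : Type*} [Fintype V1] [DecidableEq V1] [Fintype V2]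
    [DecidableEq V2] (B1 : Matrix V1 V1 ℝ) (B2 : Matrix V2 V2 ℝ) (v1 : V1) (v2 : V2) :
    ((Matrix.fromBlocks B1 0 0 B2).updateCol (Sum.inl v1)
      (Pi.single (Sum.inr v2) 1)).det = 0 := by
  have h3 : (Matrix.fromBlocks B1 0 0 B2).updateCol (Sum.inl v1)
        (Pi.single (Sum.inr v2) 1)
      = Matrix.fromBlocks (Matrix.of fun i j => if j = v1 then 0 else B1 i j) 0
        (Matrix.of fun i j => if j = v1 then (if i = v2 then (1:ℝ) else 0) else 0) B2 := by
    ext i j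
    rcases i with a | b <;> rcases j with a' | b' <;>
      simp [Matrix.updateCol_apply, Pi.single_apply] <;> split_ifs <;> simp_all
  rw [h3, Matrix.det_fromBlocks_zero₁₂]
  have : (Matrix.of fun i j => if j = v1 then (0:ℝ) else B1 i j).det = 0 :=
    Matrix.det_eq_zero_of_column_eq_zero v1 (fun i => by simp)
  rw [this, zero_mul]

lemma det_bd_cross_right {V1 V2 : Type*} [Fintype V1] [DecidableEq V1] [Fintype V2]
    [DecidableEq V2] (B1 : Matrix V1 V1 ℝ) (B2 : Matrix V2 V2 ℝ) (v1 : V1) (v2 : V2) :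
    ((Matrix.fromBlocks B1 0 0 B2).updateCol (Sum.inr v2)
      (Pi.single (Sum.inl v1) 1)).det = 0 := by
  have h3 : (Matrix.fromBlocks B1 0 0 B2).updateCol (Sum.inr v2)
        (Pi.single (Sum.inl v1) 1)
      = Matrix.fromBlocks B1
        (Matrix.of fun i j => if j = v2 then (if i = v1 then (1:ℝ) else 0) else 0) 0
        (Matrix.of fun i j => if j = v2 then 0 else B2 i j) := by
    ext i j
    rcases i with a | b <;> rcases j with a' | b' <;>
      simp [Matrix.updateCol_apply, Pi.single_apply] <;> split_ifs <;> simp_all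
  rw [h3, Matrix.det_fromBlocks_zero₂₁]
  have : (Matrix.of fun i j => if j = v2 then (0:ℝ) else B2 i j).det = 0 :=
    Matrix.det_eq_zero_of_column_eq_zero v2 (fun i => by simp)
  rw [this, mul_zero]

lemma det_main {V1 V2 : Type*} [Fintype V1] [DecidableEq V1] [Fintype V2] [DecidableEq V2]
    (v1 : V1) (v2 : V2) (l : ℝ)
    (N : Matrix ((V1 ⊕ V2) ⊕ Unit) ((V1 ⊕ V2) ⊕ Unit) ℝ)
    (B1 : Matrix V1 V1 ℝ) (B2 : Matrix V2 V2 ℝ)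
    (hblock : N.submatrix Sum.inl Sum.inl = Matrix.fromBlocks B1 0 0 B2)
    (hrow : N (Sum.inr ()) = l • (Pi.single (Sum.inr ()) 1 : ((V1 ⊕ V2) ⊕ Unit) → ℝ)
      + ((-1 : ℝ) • (Pi.single (Sum.inl (Sum.inl v1)) 1 : ((V1 ⊕ V2) ⊕ Unit) → ℝ)
        + (-1 : ℝ) • (Pi.single (Sum.inl (Sum.inr v2)) 1 : ((V1 ⊕ V2) ⊕ Unit) → ℝ)))
    (hcol : ∀ i : V1 ⊕ V2, N (Sum.inl i) (Sum.inr ()) =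
      ((-1 : ℝ) • (Pi.single (Sum.inl v1) 1 : (V1 ⊕ V2) → ℝ) + (-1 : ℝ) • (Pi.single (Sum.inr v2) 1 : (V1 ⊕ V2) → ℝ)) i) :
    N.det = l * (B1.det * B2.det)
      - (B1.submatrix (Subtype.val : {a : V1 // a ≠ v1} → V1) Subtype.val).det * B2.det
      - B1.det * (B2.submatrix (Subtype.val : {b : V2 // b ≠ v2} → V2) Subtype.val).det := by
  have hsub : ∀ r : ((V1 ⊕ V2) ⊕ Unit) → ℝ,
      (N.updateRow (Sum.inr ()) r).submatrix Sum.inl Sum.inl = Matrix.fromBlocks B1 0 0 B2 := by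
    intro r
    rw [← hblock]
    ext i j
    simp [Matrix.updateRow_ne]
  have hcolsub : ∀ r : ((V1 ⊕ V2) ⊕ Unit) → ℝ, ∀ i : V1 ⊕ V2,
      (N.updateRow (Sum.inr ()) r) (Sum.inl i) (Sum.inr ()) = N (Sum.inl i) (Sum.inr ()) := by
    intro r i
    rw [Matrix.updateRow_ne (by simp)]
  -- the three row-determinants
  have hd0 : (N.updateRow (Sum.inr ()) ((Pi.single (Sum.inr ()) 1 : ((V1 ⊕ V2) ⊕ Unit) → ℝ))).det = B1.det * B2.det := by
    rw [det_of_unit_row _ (fun j => by simp [Matrix.updateRow_self, Pi.single_apply])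
      (by simp [Matrix.updateRow_self]), hsub, Matrix.det_fromBlocks_zero₂₁]
  have hdA : (N.updateRow (Sum.inr ()) ((Pi.single (Sum.inl (Sum.inl v1)) 1 : ((V1 ⊕ V2) ⊕ Unit) → ℝ))).det
      = (B1.submatrix (Subtype.val : {a : V1 // a ≠ v1} → V1) Subtype.val).det * B2.det := by
    rw [det_border _ (Sum.inl v1) (Matrix.updateRow_self)]
    have hc : (fun i => (N.updateRow (Sum.inr ()) ((Pi.single (Sum.inl (Sum.inl v1)) 1 : ((V1 ⊕ V2) ⊕ Unit) → ℝ)))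
        (Sum.inl i) (Sum.inr ()))
        = ((-1 : ℝ) • (Pi.single (Sum.inl v1) 1 : (V1 ⊕ V2) → ℝ) + (-1 : ℝ) • (Pi.single (Sum.inr v2) 1 : (V1 ⊕ V2) → ℝ)) := by
      funext i; rw [hcolsub, hcol]
    rw [hc, hsub, Matrix.det_updateCol_add, Matrix.det_updateCol_smul,
      Matrix.det_updateCol_smul, det_bd_left, det_bd_cross_left]
    ring
  have hdB : (N.updateRow (Sum.inr ()) ((Pi.single (Sum.inl (Sum.inr v2)) 1 : ((V1 ⊕ V2) ⊕ Unit) → ℝ))).det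
      = B1.det * (B2.submatrix (Subtype.val : {b : V2 // b ≠ v2} → V2) Subtype.val).det := by
    rw [det_border _ (Sum.inr v2) (Matrix.updateRow_self)]
    have hc : (fun i => (N.updateRow (Sum.inr ()) ((Pi.single (Sum.inl (Sum.inr v2)) 1 : ((V1 ⊕ V2) ⊕ Unit) → ℝ)))
        (Sum.inl i) (Sum.inr ()))
        = ((-1 : ℝ) • (Pi.single (Sum.inl v1) 1 : (V1 ⊕ V2) → ℝ) + (-1 : ℝ) • (Pi.single (Sum.inr v2) 1 : (V1 ⊕ V2) → ℝ)) := by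
      funext i; rw [hcolsub, hcol]
    rw [hc, hsub, Matrix.det_updateCol_add, Matrix.det_updateCol_smul,
      Matrix.det_updateCol_smul, det_bd_right, det_bd_cross_right]
    ring
  have hN : N.det = (N.updateRow (Sum.inr ()) (N (Sum.inr ()))).det := by
    rw [Matrix.updateRow_eq_self]
  rw [hN, hrow, Matrix.det_updateRow_add, Matrix.det_updateRow_smul,
    Matrix.det_updateRow_add, Matrix.det_updateRow_smul, Matrix.det_updateRow_smul,
    hd0, hdA, hdB]
  ring

lemma adj_delVert_eq {V : Type*} [Fintype V] [DecidableEq V] (H : SimpleGraph V) (v : V)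
    (l : ℝ) :
    ((l • (1 : Matrix V V ℝ) - adjM H).submatrix
      (Subtype.val : {a : V // a ≠ v} → V) Subtype.val)
    = l • (1 : Matrix {a : V // a ≠ v} {a : V // a ≠ v} ℝ) - adjM (delVert H v) := by
  ext i j
  simp [adjM, delVert, Matrix.one_apply, Subtype.ext_iff]

/-- Lemma 2.7: `φ_{(H1,v1)·P1·(H2,v2)} = (x_2 − x_1)(q_{(H1,v1)}q_{(H2,v2)} − p_{(H1,v1)}p_{(H2,v2)})`. -/
theorem phi_joinOne {V1 V2 : Type*} [Fintype V1] [DecidableEq V1] [Fintype V2] [DecidableEq V2]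
    (H1 : SimpleGraph V1) (v1 : V1) (H2 : SimpleGraph V2) (v2 : V2) (l : ℝ) (hl : 2 < l) :
    phi (joinOne H1 v1 H2 v2) l =
      (x2 l - x1 l) * (qfun H1 v1 l * qfun H2 v2 l - pfun H1 v1 l * pfun H2 v2 l) := by
  classical
  set e : ((V1 ⊕ V2) ⊕ Unit) ≃ (V1 ⊕ V2 ⊕ Unit) := Equiv.sumAssoc V1 V2 Unit with he
  set N : Matrix ((V1 ⊕ V2) ⊕ Unit) ((V1 ⊕ V2) ⊕ Unit) ℝ :=
    (l • (1 : Matrix (V1 ⊕ V2 ⊕ Unit) (V1 ⊕ V2 ⊕ Unit) ℝ)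
      - adjM (joinOne H1 v1 H2 v2)).submatrix e e with hN
  have hphiG : phi (joinOne H1 v1 H2 v2) l = N.det := by
    rw [hN, Matrix.det_submatrix_equiv_self]; rfl
  have hblock : N.submatrix Sum.inl Sum.inl
      = Matrix.fromBlocks (l • (1 : Matrix V1 V1 ℝ) - adjM H1) 0 0
        (l • (1 : Matrix V2 V2 ℝ) - adjM H2) := by
    ext i j
    rcases i with a | b <;> rcases j with a' | b'
    · by_cases h : H1.Adj a a'
      · have h' : H1.Adj a' a := h.symm
        simp [hN, he, adjM, joinOne, SimpleGraph.fromRel_adj, Matrix.one_apply,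
          Equiv.sumAssoc, h, h', h.ne]
      · have h' : ¬ H1.Adj a' a := fun hh => h hh.symm
        simp [hN, he, adjM, joinOne, SimpleGraph.fromRel_adj, Matrix.one_apply,
          Equiv.sumAssoc, h, h']
    · simp [hN, he, adjM, joinOne, SimpleGraph.fromRel_adj, Matrix.one_apply, Equiv.sumAssoc]
    · simp [hN, he, adjM, joinOne, SimpleGraph.fromRel_adj, Matrix.one_apply, Equiv.sumAssoc]
    · by_cases h : H2.Adj b b'
      · have h' : H2.Adj b' b := h.symm
        simp [hN, he, adjM, joinOne, SimpleGraph.fromRel_adj, Matrix.one_apply,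
          Equiv.sumAssoc, h, h', h.ne]
      · have h' : ¬ H2.Adj b' b := fun hh => h hh.symm
        simp [hN, he, adjM, joinOne, SimpleGraph.fromRel_adj, Matrix.one_apply,
          Equiv.sumAssoc, h, h']
  have hrow : N (Sum.inr ())
      = l • (Pi.single (Sum.inr ()) 1 : ((V1 ⊕ V2) ⊕ Unit) → ℝ)
        + ((-1 : ℝ) • (Pi.single (Sum.inl (Sum.inl v1)) 1 : ((V1 ⊕ V2) ⊕ Unit) → ℝ)
          + (-1 : ℝ) • (Pi.single (Sum.inl (Sum.inr v2)) 1 : ((V1 ⊕ V2) ⊕ Unit) → ℝ)) := by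
    funext j
    rcases j with (a | b) | ⟨⟩ <;>
      simp [hN, he, adjM, joinOne, SimpleGraph.fromRel_adj, Matrix.one_apply,
        Equiv.sumAssoc, Pi.single_apply]
  have hcol : ∀ i : V1 ⊕ V2, N (Sum.inl i) (Sum.inr ()) =
      ((-1 : ℝ) • (Pi.single (Sum.inl v1) 1 : (V1 ⊕ V2) → ℝ)
        + (-1 : ℝ) • (Pi.single (Sum.inr v2) 1 : (V1 ⊕ V2) → ℝ)) i := by
    rintro (a | b) <;>
      simp [hN, he, adjM, joinOne, SimpleGraph.fromRel_adj, Matrix.one_apply,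
        Equiv.sumAssoc, Pi.single_apply]
  have hmain := det_main v1 v2 l N
    (l • (1 : Matrix V1 V1 ℝ) - adjM H1) (l • (1 : Matrix V2 V2 ℝ) - adjM H2)
    hblock hrow hcol
  rw [adj_delVert_eq H1 v1 l, adj_delVert_eq H2 v2 l] at hmain
  rw [hphiG]
  have hφ1 : (l • (1 : Matrix V1 V1 ℝ) - adjM H1).det = phi H1 l := rfl
  have hφ2 : (l • (1 : Matrix V2 V2 ℝ) - adjM H2).det = phi H2 l := rfl
  have hψ1 : (l • (1 : Matrix {a : V1 // a ≠ v1} {a : V1 // a ≠ v1} ℝ)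
      - adjM (delVert H1 v1)).det = phi (delVert H1 v1) l := rfl
  have hψ2 : (l • (1 : Matrix {b : V2 // b ≠ v2} {b : V2 // b ≠ v2} ℝ)
      - adjM (delVert H2 v2)).det = phi (delVert H2 v2) l := rfl
  rw [hφ1, hφ2, hψ1, hψ2] at hmain
  rw [hmain]
  -- algebra
  have h4 : (0 : ℝ) < l ^ 2 - 4 := by nlinarith
  have hs : Real.sqrt (l ^ 2 - 4) ^ 2 = l ^ 2 - 4 := Real.sq_sqrt h4.le
  have hs0 : Real.sqrt (l ^ 2 - 4) ≠ 0 := by positivity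
  have hx21 : x2 l - x1 l = Real.sqrt (l ^ 2 - 4) := by
    rw [x1, x2]; ring
  rw [pfun, pfun, qfun, qfun, hx21, x1, x2]
  field_simp
  ring_nf
end

section
/- Suppose G_1 and G_2 are connected finite simple graphs, u_1 is a vertex of G_1, u_2 is a vertex of G_2, and G_1 − u_1 is isomorphic to G_2 − u_2. If φ_{G_2}(ρ(G_1)) > 0, then ρ(G_1) > ρ(G_2). -/
open Finset
open scoped Classical

/-!
Let `λ_i` be the adjacency eigenvalues of `G₂` and `λ_{i₀} = ρ(G₂)` the largest one, so that
`φ_{G₂}(t) = ∏ (t - λ_i)`. For `i ≠ i₀` the span of the eigenvectors of `λ_{i₀}` and `λ_i`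
contains a nonzero vector vanishing at `u₂`, and its Rayleigh quotient gives
`λ_i ≤ ρ(G₂ - u₂) = ρ(G₁ - u₁) ≤ ρ(G₁)`. Hence every factor of `φ_{G₂}(ρ(G₁))` other than
`ρ(G₁) - ρ(G₂)` is nonnegative, and positivity of the product forces `ρ(G₂) < ρ(G₁)`.
-/

open Matrix

theorem lt_of_prod_sub_pos {ι R : Type*} [Fintype ι] [DecidableEq ι] [CommRing R] [LinearOrder R]
    [IsStrictOrderedRing R] {f : ι → R} {t : R} (i : ι) (hf : ∀ j ≠ i, f j ≤ t)
    (h : 0 < ∏ j, (t - f j)) : f i < t := by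
  by_contra! hti
  rw [← Finset.mul_prod_erase _ _ (Finset.mem_univ i)] at h
  have hrest : 0 ≤ ∏ j ∈ Finset.univ.erase i, (t - f j) :=
    Finset.prod_nonneg fun j hj => sub_nonneg.2 (hf j (Finset.ne_of_mem_erase hj))
  exact h.not_ge (mul_nonpos_of_nonpos_of_nonneg (sub_nonpos.2 hti) hrest)

namespace Matrix

section Submatrix

variable {m n R : Type*} [Fintype m] [Fintype n] [CommSemiring R]

theorem exists_submatrix_mulVec_eq_smul_of_exists {A : Matrix n n R} {t : R} (e : m ≃ n)
    (h : ∃ f ≠ 0, A *ᵥ f = t • f) : ∃ f ≠ 0, A.submatrix e e *ᵥ f = t • f := by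
  obtain ⟨f, hf, hAf⟩ := h
  refine ⟨f ∘ e, fun h0 => hf ?_, ?_⟩
  · ext i
    simpa using congrFun h0 (e.symm i)
  · rw [submatrix_mulVec_equiv, Function.comp_assoc, e.self_comp_symm, Function.comp_id, hAf]
    rfl

theorem exists_submatrix_mulVec_eq_smul_iff (A : Matrix n n R) (e : m ≃ n) (t : R) :
    (∃ f ≠ 0, A.submatrix e e *ᵥ f = t • f) ↔ ∃ f ≠ 0, A *ᵥ f = t • f :=
  ⟨fun h => by simpa using exists_submatrix_mulVec_eq_smul_of_exists e.symm h,
    exists_submatrix_mulVec_eq_smul_of_exists e⟩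

variable [DecidableEq n]

theorem dotProduct_eq_comp_val_of_apply_eq_zero {x : n → R} {u : n} (hx : x u = 0) (y : n → R) :
    x ⬝ᵥ y = (x ∘ (↑) : {i // i ≠ u} → R) ⬝ᵥ (y ∘ (↑)) := by
  rw [dotProduct, Fintype.sum_eq_add_sum_subtype_ne _ u, hx, zero_mul, zero_add]
  rfl

theorem dotProduct_mulVec_eq_submatrix_of_apply_eq_zero {x : n → R} {u : n} (hx : x u = 0)
    (A : Matrix n n R) :
    x ⬝ᵥ A *ᵥ x =
      (x ∘ (↑)) ⬝ᵥ ((A.submatrix (↑) (↑) : Matrix {i // i ≠ u} {i // i ≠ u} R) *ᵥ (x ∘ (↑))) := by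
  rw [dotProduct_eq_comp_val_of_apply_eq_zero hx]
  congr 1
  ext i
  rw [Function.comp_apply, mulVec, dotProduct_comm, dotProduct_eq_comp_val_of_apply_eq_zero hx,
    dotProduct_comm]
  rfl

end Submatrix

namespace IsHermitian

variable {n : Type*} [Fintype n] [DecidableEq n] {A : Matrix n n ℝ} (hA : A.IsHermitian)
include hA

theorem det_smul_one_sub_eq_prod (t : ℝ) :
    (t • (1 : Matrix n n ℝ) - A).det = ∏ i, (t - hA.eigenvalues i) := by
  rw [smul_one_eq_diagonal, ← scalar_apply, ← eval_charpoly, hA.charpoly_eq]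
  simp [Polynomial.eval_prod]

theorem exists_mulVec_eq_smul_iff (t : ℝ) :
    (∃ f ≠ 0, A *ᵥ f = t • f) ↔ t ∈ Set.range hA.eigenvalues := by
  have hker : ∀ f : n → ℝ, A *ᵥ f = t • f ↔ (t • (1 : Matrix n n ℝ) - A) *ᵥ f = 0 := by
    intro f
    rw [sub_mulVec, smul_mulVec, one_mulVec, sub_eq_zero, eq_comm]
  simp_rw [hker, exists_mulVec_eq_zero_iff, hA.det_smul_one_sub_eq_prod, Finset.prod_eq_zero_iff,
    sub_eq_zero, Finset.mem_univ, true_and, Set.mem_range, eq_comm]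

theorem dotProduct_mulVec_le {r : ℝ} (hr : ∀ i, hA.eigenvalues i ≤ r) (x : n → ℝ) :
    x ⬝ᵥ A *ᵥ x ≤ r * (x ⬝ᵥ x) := by
  have hpsd : (r • (1 : Matrix n n ℝ) - A).PosSemidef := by
    refine posSemidef_iff_isHermitian_and_spectrum_nonneg.2
      ⟨(isHermitian_one.smul (.all r)).sub hA, ?_⟩
    rw [← Algebra.algebraMap_eq_smul_one, ← spectrum.singleton_sub_eq,
      hA.spectrum_real_eq_range_eigenvalues]
    rintro _ ⟨_, rfl, _, ⟨i, rfl⟩, rfl⟩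
    simpa using hr i
  have := hpsd.dotProduct_mulVec_nonneg x
  rw [star_trivial, sub_mulVec, smul_mulVec, one_mulVec, dotProduct_sub, dotProduct_smul,
    smul_eq_mul] at this
  linarith

theorem dotProduct_eigenvectorBasis (i j : n) :
    ⇑(hA.eigenvectorBasis i) ⬝ᵥ ⇑(hA.eigenvectorBasis j) = if i = j then 1 else 0 := by
  rw [← orthonormal_iff_ite.1 hA.eigenvectorBasis.orthonormal i j,
    EuclideanSpace.inner_eq_star_dotProduct, star_trivial, dotProduct_comm]

theorem exists_apply_eq_zero_le_dotProduct_mulVec {i j : n} (hij : i ≠ j)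
    (hle : hA.eigenvalues j ≤ hA.eigenvalues i) (u : n) :
    ∃ x ≠ 0, x u = 0 ∧ hA.eigenvalues j * (x ⬝ᵥ x) ≤ x ⬝ᵥ A *ᵥ x := by
  set v := ⇑(hA.eigenvectorBasis i)
  set w := ⇑(hA.eigenvectorBasis j)
  have hvv : v ⬝ᵥ v = 1 := by simpa using hA.dotProduct_eigenvectorBasis i i
  have hww : w ⬝ᵥ w = 1 := by simpa using hA.dotProduct_eigenvectorBasis j j
  have hvw : v ⬝ᵥ w = 0 := by simpa [hij] using hA.dotProduct_eigenvectorBasis i j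
  have hwv : w ⬝ᵥ v = 0 := by rw [dotProduct_comm, hvw]
  have hAv : A *ᵥ v = hA.eigenvalues i • v := hA.mulVec_eigenvectorBasis i
  have hAw : A *ᵥ w = hA.eigenvalues j • w := hA.mulVec_eigenvectorBasis j
  by_cases hwu : w u = 0
  · refine ⟨w, fun h => by simp [h] at hww, hwu, ?_⟩
    rw [hAw, dotProduct_smul, smul_eq_mul]
  set x := w u • v - v u • w
  have hxx : x ⬝ᵥ x = w u ^ 2 + v u ^ 2 := by
    simp only [x, sub_dotProduct, dotProduct_sub, smul_dotProduct, dotProduct_smul, smul_eq_mul,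
      hvv, hww, hvw, hwv]
    ring
  have hxAx : x ⬝ᵥ A *ᵥ x = w u ^ 2 * hA.eigenvalues i + v u ^ 2 * hA.eigenvalues j := by
    simp only [x, mulVec_sub, mulVec_smul, hAv, hAw, sub_dotProduct, dotProduct_sub,
      smul_dotProduct, dotProduct_smul, smul_eq_mul, hvv, hww, hvw, hwv]
    ring
  refine ⟨x, fun h => ?_, ?_, ?_⟩
  · rw [h, zero_dotProduct] at hxx
    exact hwu (by nlinarith [sq_nonneg (w u), sq_nonneg (v u)])
  · simp only [x, Pi.sub_apply, Pi.smul_apply, smul_eq_mul]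
    ring
  · rw [hxx, hxAx]
    nlinarith [sq_nonneg (w u)]

end IsHermitian

end Matrix

section Graph

variable {V W : Type*} [Fintype V] [Fintype W]

theorem adjM_isHermitian (G : SimpleGraph V) : (adjM G).IsHermitian := by
  ext a b
  simp [adjM, G.adj_comm]

theorem adjM_eq_submatrix_of_iso {G : SimpleGraph V} {H : SimpleGraph W} (e : G ≃g H) :
    adjM G = (adjM H).submatrix e e := by
  ext a b
  simp [adjM, e.map_adj_iff]

theorem specRad_congr {G : SimpleGraph V} {H : SimpleGraph W} (e : G ≃g H) :
    specRad G = specRad H := by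
  unfold specRad
  rw [adjM_eq_submatrix_of_iso e]
  congr 1
  ext t
  exact exists_submatrix_mulVec_eq_smul_iff _ _ _

variable [DecidableEq V]

theorem adjM_delVert (G : SimpleGraph V) (u : V) :
    adjM (delVert G u) = (adjM G).submatrix (↑) (↑) :=
  rfl

theorem specRad_eq_sSup_eigenvalues (G : SimpleGraph V) :
    specRad G = sSup (Set.range (adjM_isHermitian G).eigenvalues) := by
  simp only [specRad, (adjM_isHermitian G).exists_mulVec_eq_smul_iff, Set.ofPred_mem_eq]

theorem eigenvalues_le_specRad (G : SimpleGraph V) (i : V) :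
    (adjM_isHermitian G).eigenvalues i ≤ specRad G := by
  rw [specRad_eq_sSup_eigenvalues]
  exact le_csSup (Set.finite_range _).bddAbove ⟨i, rfl⟩

theorem exists_eigenvalues_eq_specRad [Nonempty V] (G : SimpleGraph V) :
    ∃ i, (adjM_isHermitian G).eigenvalues i = specRad G := by
  rw [specRad_eq_sSup_eigenvalues]
  exact (Set.range_nonempty _).csSup_mem (Set.finite_range _)

theorem exists_adjM_mulVec_eq_specRad_smul [Nonempty V] (G : SimpleGraph V) :
    ∃ f ≠ 0, adjM G *ᵥ f = specRad G • f :=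
  ((adjM_isHermitian G).exists_mulVec_eq_smul_iff _).2 (exists_eigenvalues_eq_specRad G)

theorem specRad_nonneg [Nonempty V] (G : SimpleGraph V) : 0 ≤ specRad G := by
  have htrace : ∑ i, (adjM_isHermitian G).eigenvalues i = 0 := by
    simpa [Matrix.trace, adjM, eq_comm] using (adjM_isHermitian G).trace_eq_sum_eigenvalues
  by_contra! hneg
  have := Finset.sum_lt_sum_of_nonempty Finset.univ_nonempty
    fun i _ => (eigenvalues_le_specRad G i).trans_lt hneg
  simp_all

theorem specRad_of_isEmpty [IsEmpty V] (G : SimpleGraph V) : specRad G = 0 := by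
  simp [specRad_eq_sSup_eigenvalues, Set.range_eq_empty]

theorem phi_eq_prod_eigenvalues (G : SimpleGraph V) (t : ℝ) :
    phi G t = ∏ i, (t - (adjM_isHermitian G).eigenvalues i) :=
  (adjM_isHermitian G).det_smul_one_sub_eq_prod t

theorem le_specRad_of_le_dotProduct (G : SimpleGraph V) {x : V → ℝ} (hx : x ≠ 0) {t : ℝ}
    (h : t * (x ⬝ᵥ x) ≤ x ⬝ᵥ adjM G *ᵥ x) : t ≤ specRad G :=
  le_of_mul_le_mul_right
    (h.trans ((adjM_isHermitian G).dotProduct_mulVec_le (eigenvalues_le_specRad G) x))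
    (by simpa using dotProduct_star_self_pos_iff.2 hx)

theorem le_specRad_delVert_of_le_dotProduct (G : SimpleGraph V) {u : V} {x : V → ℝ}
    (hx : x ≠ 0) (hxu : x u = 0) {t : ℝ} (h : t * (x ⬝ᵥ x) ≤ x ⬝ᵥ adjM G *ᵥ x) :
    t ≤ specRad (delVert G u) := by
  refine le_specRad_of_le_dotProduct _ (x := x ∘ (↑)) (fun h0 => hx ?_) ?_
  · ext v
    by_cases hv : v = u
    · rw [hv, hxu, Pi.zero_apply]
    · exact congrFun h0 ⟨v, hv⟩
  · rwa [adjM_delVert, ← dotProduct_mulVec_eq_submatrix_of_apply_eq_zero hxu,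
      ← dotProduct_eq_comp_val_of_apply_eq_zero hxu]

theorem eigenvalues_le_specRad_delVert (G : SimpleGraph V) (u : V) {i j : V} (hij : i ≠ j)
    (hi : (adjM_isHermitian G).eigenvalues i = specRad G) :
    (adjM_isHermitian G).eigenvalues j ≤ specRad (delVert G u) := by
  obtain ⟨x, hx, hxu, hle⟩ := (adjM_isHermitian G).exists_apply_eq_zero_le_dotProduct_mulVec hij
    (hi ▸ eigenvalues_le_specRad G j) u
  exact le_specRad_delVert_of_le_dotProduct G hx hxu hle

theorem specRad_delVert_le (G : SimpleGraph V) (u : V) : specRad (delVert G u) ≤ specRad G := by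
  have : Nonempty V := ⟨u⟩
  cases isEmpty_or_nonempty {v // v ≠ u}
  · rw [specRad_of_isEmpty]
    exact specRad_nonneg G
  obtain ⟨y, hy, hAy⟩ := exists_adjM_mulVec_eq_specRad_smul (delVert G u)
  set x : V → ℝ := Function.extend (↑) y 0
  have hxy : x ∘ (↑) = y := Function.extend_comp Subtype.val_injective y 0
  have hxu : x u = 0 := Function.extend_apply' _ _ _ (by simp)
  refine le_specRad_of_le_dotProduct G (x := x) (fun h0 => hy (by rw [← hxy, h0]; rfl)) ?_
  rw [dotProduct_mulVec_eq_submatrix_of_apply_eq_zero hxu,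
    dotProduct_eq_comp_val_of_apply_eq_zero hxu, hxy, ← adjM_delVert, hAy, dotProduct_smul,
    smul_eq_mul]

end Graph

theorem specRad_lt_of_phi_pos_general {V1 V2 : Type*}
    [Fintype V1] [Fintype V2] [DecidableEq V2]
    (G1 : SimpleGraph V1) (G2 : SimpleGraph V2)
    (u1 : V1) (u2 : V2)
    (hiso : Nonempty (delVert G1 u1 ≃g delVert G2 u2))
    (hphi : 0 < phi G2 (specRad G1)) :
    specRad G2 < specRad G1 := by
  obtain ⟨e⟩ := hiso
  have : Nonempty V2 := ⟨u2⟩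
  obtain ⟨i, hi⟩ := exists_eigenvalues_eq_specRad G2
  rw [phi_eq_prod_eigenvalues] at hphi
  rw [← hi]
  refine lt_of_prod_sub_pos i (fun j hj => ?_) hphi
  calc _ ≤ specRad (delVert G2 u2) := eigenvalues_le_specRad_delVert G2 u2 hj.symm hi
    _ = specRad (delVert G1 u1) := (specRad_congr e).symm
    _ ≤ specRad G1 := specRad_delVert_le G1 u1

/-- Lemma 2.12: if `G1`, `G2` are connected, `G1 − u1 ≅ G2 − u2`, and `φ_{G2}(ρ(G1)) > 0`,
then `ρ(G1) > ρ(G2)`. -/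
theorem specRad_lt_of_phi_pos {V1 V2 : Type*}
    [Fintype V1] [DecidableEq V1] [Fintype V2] [DecidableEq V2]
    (G1 : SimpleGraph V1) (G2 : SimpleGraph V2)
    (hG1 : G1.Connected) (hG2 : G2.Connected) (u1 : V1) (u2 : V2)
    (hiso : Nonempty (delVert G1 u1 ≃g delVert G2 u2))
    (hphi : 0 < phi G2 (specRad G1)) :
    specRad G2 < specRad G1 :=
  specRad_lt_of_phi_pos_general G1 G2 u1 u2 hiso hphi
end

section
/- For every integer k ≥ 7: ρ_k < ρ″_{k−4} and ρ_k < ρ′_{k−3}, where ρ_k, ρ′_m, ρ″_m denote the unique roots in the interval (√(2+√5), ∞) of the equations d_2 = 2·x_1^k/(1 − x_1^{k+1}), d_2 = d_1^{1/2}·x_1^{m+1/2}, and d_2 = x_1^m, respectively. -/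
open Finset
open scoped Classical

set_option maxHeartbeats 1000000

lemma sqrt5_lt : (2:ℝ) < Real.sqrt 5 := by
  have : (2:ℝ) = Real.sqrt 4 := by rw [show (4:ℝ) = 2^2 by norm_num, Real.sqrt_sq]; norm_num
  rw [this]; exact Real.sqrt_lt_sqrt (by norm_num) (by norm_num)

lemma s_gt_two : (2:ℝ) < Real.sqrt (2 + Real.sqrt 5) := by
  have h5 := sqrt5_lt
  have : (2:ℝ) = Real.sqrt 4 := by rw [show (4:ℝ) = 2^2 by norm_num, Real.sqrt_sq]; norm_num
  rw [this]; exact Real.sqrt_lt_sqrt (by norm_num) (by linarith)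

lemma basic (l : ℝ) (hl : Real.sqrt (2 + Real.sqrt 5) < l) :
    0 < x1 l ∧ x1 l ^ 2 + x1 l ^ 4 < 1 ∧ d2f l * x1 l ^ 3 = 1 - x1 l ^ 2 - x1 l ^ 4 ∧
      d1f l * x1 l = 1 + x1 l ^ 2 - x1 l ^ 4 := by
  have h5 := sqrt5_lt
  have h5sq : Real.sqrt 5 ^ 2 = 5 := Real.sq_sqrt (by norm_num)
  have hl2 : 2 < l := lt_trans s_gt_two hl
  have hlsq : 2 + Real.sqrt 5 < l ^ 2 := by
    have h0 : (0:ℝ) ≤ 2 + Real.sqrt 5 := by linarith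
    nlinarith [Real.sq_sqrt h0, Real.sqrt_nonneg (2 + Real.sqrt 5), hl]
  have hD : (0:ℝ) < l ^ 2 - 4 := by nlinarith
  set q := Real.sqrt (l ^ 2 - 4) with hq
  have hq2 : q ^ 2 = l ^ 2 - 4 := Real.sq_sqrt hD.le
  have hq0 : 0 ≤ q := Real.sqrt_nonneg _
  have hql : q < l := by nlinarith
  have ht0 : 0 < x1 l := by unfold x1; rw [← hq]; linarith
  set t := x1 l with ht
  have htv : t = (l - q) / 2 := by rw [ht]; unfold x1; rw [← hq]
  -- t * x2 = 1, t + x2 = l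
  have hx2v : x2 l = (l + q) / 2 := by unfold x2; rw [← hq]
  have hprod : t * x2 l = 1 := by rw [htv, hx2v]; nlinarith
  have hsum : t + x2 l = l := by rw [htv, hx2v]; ring
  -- key: t^2 + t^4 < 1
  have hcmp : (3 - Real.sqrt 5) * l < (Real.sqrt 5 + 1) * q := by
    have h1 : ((3 - Real.sqrt 5) * l) ^ 2 < ((Real.sqrt 5 + 1) * q) ^ 2 := by nlinarith
    nlinarith [mul_pos (by nlinarith : (0:ℝ) < 3 - Real.sqrt 5) (by linarith : (0:ℝ) < l),
      mul_nonneg (by nlinarith : (0:ℝ) ≤ Real.sqrt 5 + 1) hq0]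
  have htc : t ^ 2 < (Real.sqrt 5 - 1) / 2 := by
    have h4 : (l - q) * (l + q) = 4 := by nlinarith
    have h4l : 4 * l < (Real.sqrt 5 + 1) * (l + q) := by nlinarith
    have hlq : 0 < l + q := by linarith
    have hgt : (Real.sqrt 5 - 1) * l < l + q := by nlinarith
    have hsq : ((Real.sqrt 5 - 1) * l) ^ 2 < (l + q) ^ 2 :=
      pow_lt_pow_left₀ hgt (mul_nonneg (by nlinarith) (by linarith)) (by norm_num)
    have hgt2 : 2 * (Real.sqrt 5 + 1) < (l + q) ^ 2 := by
      nlinarith [hsq, hlsq, h5sq, (show Real.sqrt 5 ^ 2 * l ^ 2 = 5 * l ^ 2 by rw [h5sq]),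
        mul_pos (show (0:ℝ) < 6 - 2 * Real.sqrt 5 by nlinarith)
          (show (0:ℝ) < l ^ 2 - (2 + Real.sqrt 5) by linarith)]
    have h4sq : ((l - q) * (l + q)) ^ 2 = 16 := by rw [h4]; norm_num
    rw [htv]
    nlinarith [hgt2, h4sq, h5sq, sq_nonneg (l - q), mul_pos hlq hlq]
  have hsum1 : t ^ 2 + t ^ 4 < 1 := by nlinarith [sq_nonneg t]
  refine ⟨ht0, hsum1, ?_, ?_⟩
  · -- d2f l * t^3 = 1 - t^2 - t^4
    have hx2 : x2 l = 1 / t := by field_simp at hprod ⊢; linarith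
    unfold d2f; rw [hx2, ← hsum, hx2]
    field_simp; ring
  · have hx2 : x2 l = 1 / t := by field_simp at hprod ⊢; linarith
    unfold d1f; rw [← ht, ← hsum, hx2]
    field_simp; ring

lemma x1_anti {u v : ℝ} (hu : 2 < u) (huv : u ≤ v) : x1 v ≤ x1 u := by
  have hv : 2 < v := lt_of_lt_of_le hu huv
  have hDu : (0:ℝ) ≤ u ^ 2 - 4 := by nlinarith
  have hDv : (0:ℝ) ≤ v ^ 2 - 4 := by nlinarith
  set p := Real.sqrt (u ^ 2 - 4) with hp
  set q := Real.sqrt (v ^ 2 - 4) with hqd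
  have hp2 : p ^ 2 = u ^ 2 - 4 := Real.sq_sqrt hDu
  have hq2 : q ^ 2 = v ^ 2 - 4 := Real.sq_sqrt hDv
  have hp0 : 0 ≤ p := Real.sqrt_nonneg _
  have hq0 : 0 ≤ q := Real.sqrt_nonneg _
  have hpq : p ≤ q := Real.sqrt_le_sqrt (by nlinarith)
  have hpu : p < u := by nlinarith
  have hqv : q < v := by nlinarith
  unfold x1; rw [← hp, ← hqd]
  nlinarith [mul_nonneg (sub_nonneg.2 huv) (add_nonneg hq0 hp0)]

lemma d2f_mono {u v : ℝ} (hu : Real.sqrt (2 + Real.sqrt 5) < u) (huv : u ≤ v) :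
    d2f u ≤ d2f v := by
  have hv : Real.sqrt (2 + Real.sqrt 5) < v := lt_of_lt_of_le hu huv
  obtain ⟨htu0, htuS, hd2u, -⟩ := basic u hu
  obtain ⟨htv0, htvS, hd2v, -⟩ := basic v hv
  set tu := x1 u
  set tv := x1 v
  have hanti : tv ≤ tu := x1_anti (lt_trans s_gt_two hu) huv
  have htu1 : tu < 1 := by nlinarith [pow_pos htu0 4]
  have key : (1 - tu^2 - tu^4) * tv^3 ≤ (1 - tv^2 - tv^4) * tu^3 := by
    have hbr : 0 ≤ (tu - tv) * (tv^2 + tv*tu + tu^2 - tv^2*tu^2 + tv^3*tu^3) :=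
      mul_nonneg (by linarith)
        (by nlinarith [mul_pos htv0 htu0,
          mul_nonneg (show (0:ℝ) ≤ 1 - tv^2 by nlinarith) (sq_nonneg tu),
          mul_pos (mul_pos htv0 htv0) (mul_pos htv0 (mul_pos htu0 (mul_pos htu0 htu0)))])
    nlinarith [hbr]
  have hpos : (0:ℝ) < tu^3 * tv^3 := by positivity
  have h1 : d2f u * (tu^3 * tv^3) ≤ d2f v * (tu^3 * tv^3) := by
    calc d2f u * (tu^3 * tv^3) = (d2f u * tu^3) * tv^3 := by ring
      _ = (1 - tu^2 - tu^4) * tv^3 := by rw [hd2u]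
      _ ≤ (1 - tv^2 - tv^4) * tu^3 := key
      _ = (d2f v * tv^3) * tu^3 := by rw [hd2v]
      _ = d2f v * (tu^3 * tv^3) := by ring
  exact le_of_mul_le_mul_right h1 hpos


/-- Lemma 2.14 (Lemma 3.1): for `k ≥ 7`, `ρ_k < ρ″_{k−4}` and `ρ_k < ρ′_{k−3}`, where these
are the unique roots in `(√(2+√5), ∞)` of `d_2 = 2x_1^k/(1−x_1^{k+1})`, `d_2 = x_1^{k−4}`,
and `d_2 = d_1^{1/2} x_1^{(k−3)+1/2}` respectively. -/
theorem rho_compare (k : ℕ) (hk : 7 ≤ k) (a b c : ℝ)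
    (ha1 : Real.sqrt (2 + Real.sqrt 5) < a)
    (ha2 : d2f a = 2 * x1 a ^ k / (1 - x1 a ^ (k + 1)))
    (hb1 : Real.sqrt (2 + Real.sqrt 5) < b)
    (hb2 : d2f b = x1 b ^ (k - 4))
    (hc1 : Real.sqrt (2 + Real.sqrt 5) < c)
    (hc2 : d2f c = d1f c ^ ((1 : ℝ) / 2) * x1 c ^ (((k - 3 : ℕ) : ℝ) + 1 / 2)) :
    a < b ∧ a < c := by
  obtain ⟨hta0, htaS, hd2a, hd1a⟩ := basic a ha1
  set ta := x1 a with hta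
  clear_value ta
  have hta1 : ta < 1 := by nlinarith [pow_pos hta0 4]
  have hpk : ta ^ (k+1) < 1 := pow_lt_one₀ hta0.le hta1 (by omega)
  have hne : 1 - ta ^ (k+1) ≠ 0 := ne_of_gt (by linarith)
  have hmul : d2f a * (1 - ta ^ (k+1)) = 2 * ta ^ k := by
    rw [ha2]; field_simp
  have hsucc : ta ^ (k+1) = ta ^ k * ta := pow_succ ta k
  have hroot : ta ^ k * (ta + ta^3 - ta^5) = 1 - ta^2 - ta^4 := by
    linear_combination (-(ta^3)) * hmul + (1 - ta^(k+1)) * hd2a - (1 - ta^2 - ta^4) * hsucc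
  have hPa : (0:ℝ) < 1 + ta^2 - ta^4 := by nlinarith [sq_nonneg ta]
  constructor
  · -- a < b
    by_contra hcon
    push_neg at hcon
    obtain ⟨htb0, htbS, hd2b, -⟩ := basic b hb1
    set tb := x1 b with htb
    clear_value tb
    have hanti : ta ≤ tb := by
      have := x1_anti (lt_trans s_gt_two hb1) hcon
      rwa [← hta, ← htb] at this
    have hQ : ta^2 + ta^4 - ta^6 < 1 := by nlinarith [pow_pos hta0 6]
    have hpowdec : ta ^ k = ta ^ (k-4) * ta ^ 4 := by
      rw [← pow_add]; congr 1; omega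
    have step : d2f a * ta^3 < ta ^ (k-4) * ta^3 := by
      have e : d2f a * ta^3 = ta ^ (k-4) * ta^3 * (ta^2 + ta^4 - ta^6) := by
        rw [hd2a, ← hroot, hpowdec]; ring
      rw [e]
      nlinarith [mul_pos (pow_pos hta0 (k-4)) (pow_pos hta0 3)]
    have hlt : d2f a < ta ^ (k-4) := lt_of_mul_lt_mul_right step (by positivity)
    have hle : ta ^ (k-4) ≤ tb ^ (k-4) := pow_le_pow_left₀ hta0.le hanti _
    have hmono : d2f b ≤ d2f a := d2f_mono hb1 hcon
    linarith
  · -- a < c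
    by_contra hcon
    push_neg at hcon
    obtain ⟨htc0, htcS, hd2c, hd1c⟩ := basic c hc1
    set tc := x1 c with htc
    clear_value tc
    have hanti : ta ≤ tc := by
      have := x1_anti (lt_trans s_gt_two hc1) hcon
      rwa [← hta, ← htc] at this
    have htc1 : tc < 1 := by nlinarith [pow_pos htc0 4]
    have hPc : (0:ℝ) < 1 + tc^2 - tc^4 := by nlinarith [sq_nonneg tc]
    have hQa0 : (0:ℝ) ≤ ta^2 + ta^4 - ta^6 := by
      nlinarith [mul_nonneg (pow_nonneg hta0.le 4) (show (0:ℝ) ≤ 1 - ta^2 by nlinarith [sq_nonneg ta])]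
    have hQmono : ta^2 + ta^4 - ta^6 ≤ tc^2 + tc^4 - tc^6 := by
      have hbr : 0 ≤ (tc^2 - ta^2) * (1 + ta^2 + tc^2 - ta^4 - ta^2*tc^2 - tc^4) := by
        apply mul_nonneg (by nlinarith)
        nlinarith [mul_nonneg (show (0:ℝ) ≤ 1 - ta^2 by nlinarith [sq_nonneg ta]) (sq_nonneg ta),
          mul_nonneg (show (0:ℝ) ≤ 1 - ta^2 by nlinarith [sq_nonneg ta]) (sq_nonneg tc)]
      nlinarith [hbr]
    have hd1cpos : 0 < d1f c := by
      have h1 : 0 < d1f c * tc := by rw [hd1c]; exact hPc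
      nlinarith [h1, htc0]
    -- rewrite hc2
    have e1 : tc ^ (((k - 3 : ℕ) : ℝ) + 1/2) = tc ^ (k-3) * Real.sqrt tc := by
      rw [Real.rpow_add htc0, Real.rpow_natCast, Real.sqrt_eq_rpow]
    have e2 : d1f c ^ ((1:ℝ)/2) = Real.sqrt (d1f c) := (Real.sqrt_eq_rpow _).symm
    have hC : d2f c = tc ^ (k-3) * Real.sqrt (1 + tc^2 - tc^4) := by
      rw [hc2, e1, e2, ← hd1c, Real.sqrt_mul hd1cpos.le]
      ring
    -- pointwise at a
    have hval : d2f a = ta ^ (k-3) * (ta * (1 + ta^2 - ta^4)) := by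
      have hpd : ta ^ k = ta ^ (k-3) * ta ^ 3 := by rw [← pow_add]; congr 1; omega
      have e : d2f a * ta^3 = (ta ^ (k-3) * (ta * (1 + ta^2 - ta^4))) * ta^3 := by
        rw [hd2a, ← hroot, hpd]; ring
      exact mul_right_cancel₀ (by positivity) e
    have hs1 : ta * Real.sqrt (1 + ta^2 - ta^4) < 1 := by
      have h2 : (ta * Real.sqrt (1 + ta^2 - ta^4))^2 < 1 := by
        rw [mul_pow, Real.sq_sqrt hPa.le]
        nlinarith [pow_pos hta0 6]
      nlinarith [mul_nonneg hta0.le (Real.sqrt_nonneg (1 + ta^2 - ta^4))]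
    have hsp : 0 < Real.sqrt (1 + ta^2 - ta^4) := Real.sqrt_pos.2 hPa
    have hs2 : ta * (1 + ta^2 - ta^4) < Real.sqrt (1 + ta^2 - ta^4) := by
      calc ta * (1 + ta^2 - ta^4)
          = (ta * Real.sqrt (1 + ta^2 - ta^4)) * Real.sqrt (1 + ta^2 - ta^4) := by
            rw [mul_assoc, Real.mul_self_sqrt hPa.le]
        _ < 1 * Real.sqrt (1 + ta^2 - ta^4) := mul_lt_mul_of_pos_right hs1 hsp
        _ = Real.sqrt (1 + ta^2 - ta^4) := one_mul _
    have hlt : d2f a < ta ^ (k-3) * Real.sqrt (1 + ta^2 - ta^4) := by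
      rw [hval]; exact mul_lt_mul_of_pos_left hs2 (pow_pos hta0 _)
    -- monotone comparison
    have hA0 : 0 ≤ ta ^ (k-3) * Real.sqrt (1 + ta^2 - ta^4) := by positivity
    have hC0 : 0 ≤ tc ^ (k-3) * Real.sqrt (1 + tc^2 - tc^4) := by positivity
    have hsqle : (ta ^ (k-3) * Real.sqrt (1 + ta^2 - ta^4))^2
        ≤ (tc ^ (k-3) * Real.sqrt (1 + tc^2 - tc^4))^2 := by
      rw [mul_pow, mul_pow, Real.sq_sqrt hPa.le, Real.sq_sqrt hPc.le]
      have ea : (ta^(k-3))^2 * (1 + ta^2 - ta^4) = ta^(2*(k-3)-2) * (ta^2 + ta^4 - ta^6) := by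
        rw [← pow_mul, show (k-3)*2 = (2*(k-3)-2) + 2 from by omega, pow_add]; ring
      have ec : (tc^(k-3))^2 * (1 + tc^2 - tc^4) = tc^(2*(k-3)-2) * (tc^2 + tc^4 - tc^6) := by
        rw [← pow_mul, show (k-3)*2 = (2*(k-3)-2) + 2 from by omega, pow_add]; ring
      rw [ea, ec]
      have h1 : ta^(2*(k-3)-2) ≤ tc^(2*(k-3)-2) := pow_le_pow_left₀ hta0.le hanti _
      exact mul_le_mul h1 hQmono hQa0 (pow_nonneg htc0.le _)
    have hAC : ta ^ (k-3) * Real.sqrt (1 + ta^2 - ta^4)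
        ≤ tc ^ (k-3) * Real.sqrt (1 + tc^2 - tc^4) := by
      have h := Real.sqrt_le_sqrt hsqle
      rwa [Real.sqrt_sq hA0, Real.sqrt_sq hC0] at h
    have hmono : d2f c ≤ d2f a := d2f_mono hc1 hcon
    linarith [hC ▸ hmono]
end
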